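/- Let H be a real Hilbert space and let R be a subset of the closed unit ball B(H). For each integer k ≥ 1 define Q_k := {λ₁r₁ + ⋯ + λ_k r_k : r₁,…,r_k ∈ R, λ₁,…,λ_k ∈ [−1,1]}. Then every a ∈ B(H) satisfies d_R(a, Q_k) ≤ 1/√k; that is, B(H) is contained in the set of points at d_R-distance at most 1/√k from Q_k. -/
import Mathlib

open scoped InnerProductSpace

noncomputable section

/-- The seminorm `‖x‖_R = sup_{r ∈ R} |⟨r,x⟩|` associated to a bounded set `R`. -/
def normR {H : Type*} [NormedAddCommGroup H] [InnerProductSpace ℝ H] (R : Set H) (x : H) : ℝ :=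
  ⨆ r : R, |⟪(r : H), x⟫_ℝ|

/-- The pseudometric `d_R(x,y) = ‖x - y‖_R`. -/
def dR {H : Type*} [NormedAddCommGroup H] [InnerProductSpace ℝ H] (R : Set H) (x y : H) : ℝ :=
  normR R (x - y)

/-- The set `Q_k = {λ₁r₁ + ⋯ + λ_k r_k : rᵢ ∈ R, λᵢ ∈ [-1,1]}`. -/
def Qset {H : Type*} [NormedAddCommGroup H] [InnerProductSpace ℝ H] (R : Set H) (k : ℕ) :
    Set H :=
  {x | ∃ (r : Fin k → H) (lam : Fin k → ℝ),
    (∀ i, r i ∈ R) ∧ (∀ i, lam i ∈ Set.Icc (-1 : ℝ) 1) ∧ x = ∑ i, lam i • r i}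

lemma normR_nonneg {H : Type*} [NormedAddCommGroup H] [InnerProductSpace ℝ H]
    (R : Set H) (x : H) : 0 ≤ normR R x :=
  Real.iSup_nonneg fun _ => abs_nonneg _

lemma normR_le_norm {H : Type*} [NormedAddCommGroup H] [InnerProductSpace ℝ H]
    {R : Set H} (hR : R ⊆ Metric.closedBall 0 1) (x : H) : normR R x ≤ ‖x‖ := by
  apply Real.iSup_le _ (norm_nonneg x)
  rintro ⟨r, hr⟩
  calc |⟪r, x⟫_ℝ| ≤ ‖r‖ * ‖x‖ := abs_real_inner_le_norm r x
    _ ≤ 1 * ‖x‖ := by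
        have := mem_closedBall_zero_iff.mp (hR hr)
        gcongr
    _ = ‖x‖ := one_mul _

lemma energy_step {H : Type*} [NormedAddCommGroup H] [InnerProductSpace ℝ H]
    (v s : H) (hs : ‖s‖ ≤ 1) :
    ‖v - ⟪s, v⟫_ℝ • s‖ ^ 2 ≤ ‖v‖ ^ 2 - ⟪s, v⟫_ℝ ^ 2 := by
  set t := ⟪s, v⟫_ℝ with ht
  have hexp : ‖v - t • s‖ ^ 2 = ‖v‖ ^ 2 - 2 * ⟪v, t • s⟫_ℝ + ‖t • s‖ ^ 2 :=
    norm_sub_sq_real v (t • s)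
  have hinner : ⟪v, t • s⟫_ℝ = t * t := by
    rw [real_inner_smul_right, real_inner_comm]
  have hns : ‖t • s‖ ^ 2 ≤ t ^ 2 := by
    rw [norm_smul]
    have h1 : ‖t‖ * ‖s‖ ≤ ‖t‖ * 1 := mul_le_mul_of_nonneg_left hs (norm_nonneg t)
    have h2 : ‖t‖ * ‖s‖ ≤ |t| := by simpa using h1
    have h3 : (0:ℝ) ≤ ‖t‖ * ‖s‖ := by positivity
    calc (‖t‖ * ‖s‖) ^ 2 ≤ |t| ^ 2 := by nlinarith [abs_nonneg t]
      _ = t ^ 2 := sq_abs t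
  rw [hexp, hinner]
  nlinarith [hns]

lemma key_lemma {H : Type*} [NormedAddCommGroup H] [InnerProductSpace ℝ H]
    {R : Set H} (hR : R ⊆ Metric.closedBall 0 1) (hRne : R.Nonempty)
    {k : ℕ} (hk : 1 ≤ k) {a : H} (ha : ‖a‖ ≤ 1) :
    ∀ j : ℕ, j ≤ k → ∃ (r : Fin j → H) (lam : Fin j → ℝ),
      (∀ i, r i ∈ R) ∧ (∀ i, lam i ∈ Set.Icc (-1:ℝ) 1) ∧
      (dR R a (∑ i, lam i • r i) ≤ 1 / Real.sqrt k ∨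
        ‖a - ∑ i, lam i • r i‖ ^ 2 ≤ 1 - j / k) := by
  obtain ⟨r0, hr0⟩ := hRne
  intro j
  induction j with
  | zero =>
    intro _
    refine ⟨Fin.elim0, Fin.elim0, (fun i => i.elim0), (fun i => i.elim0), Or.inr ?_⟩
    simp only [Finset.univ_eq_empty, Finset.sum_empty, sub_zero, Nat.cast_zero, zero_div]
    nlinarith [norm_nonneg a]
  | succ j ih =>
    intro hj
    obtain ⟨r, lam, hrR, hlam, hdisj⟩ := ih (le_of_lt (Nat.lt_of_lt_of_le (Nat.lt_succ_self j) hj))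
    obtain ⟨q, hq⟩ : ∃ q, q = ∑ i, lam i • r i := ⟨_, rfl⟩
    rw [← hq] at hdisj
    have hkpos : (0:ℝ) < k := by exact_mod_cast hk
    by_cases hd : dR R a q ≤ 1 / Real.sqrt k
    · refine ⟨Fin.snoc r r0, Fin.snoc lam 0, ?_, ?_, Or.inl ?_⟩
      · intro i
        refine Fin.lastCases ?_ ?_ i
        · simpa using hr0
        · intro i; simpa using hrR i
      · intro i
        refine Fin.lastCases ?_ ?_ i
        · simp
        · intro i; simpa using hlam i
      · have : ∑ i : Fin (j+1), (Fin.snoc lam 0 : Fin (j+1) → ℝ) i • (Fin.snoc r r0 : Fin (j+1) → H) i = q := by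
          rw [Fin.sum_univ_castSucc]
          simp [hq]
        rw [this]; exact hd
    · have hE : ‖a - q‖ ^ 2 ≤ 1 - j / k := hdisj.resolve_left hd
      have hjk : (0:ℝ) ≤ (j:ℝ) / k := by positivity
      have hnq : ‖a - q‖ ≤ 1 := by nlinarith [norm_nonneg (a - q)]
      have hlt : (1 : ℝ) / Real.sqrt k < normR R (a - q) := lt_of_not_ge hd
      haveI : Nonempty R := ⟨⟨r0, hr0⟩⟩
      obtain ⟨s, hs⟩ := exists_lt_of_lt_ciSup hlt
      set t := ⟪(s:H), a - q⟫_ℝ with htdef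
      have hs1 : ‖(s:H)‖ ≤ 1 := mem_closedBall_zero_iff.mp (hR s.2)
      have ht1 : |t| ≤ 1 := by
        calc |t| ≤ ‖(s:H)‖ * ‖a - q‖ := abs_real_inner_le_norm _ _
          _ ≤ 1 := by nlinarith [norm_nonneg (a - q)]
      have hsqrt : (0:ℝ) < Real.sqrt k := Real.sqrt_pos.mpr hkpos
      have htsq : 1 / (k:ℝ) ≤ t ^ 2 := by
        have h1 : (1:ℝ) / Real.sqrt k < |t| := hs
        have h2 : (1 / Real.sqrt k) ^ 2 ≤ t ^ 2 := by
          have h3 : (1 / Real.sqrt k) ^ 2 ≤ |t| ^ 2 :=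
            pow_le_pow_left₀ (by positivity) h1.le 2
          rwa [sq_abs] at h3
        calc 1 / (k:ℝ) = (1 / Real.sqrt k) ^ 2 := by
              rw [div_pow, one_pow, Real.sq_sqrt hkpos.le]
          _ ≤ t ^ 2 := h2
      refine ⟨Fin.snoc r s, Fin.snoc lam t, ?_, ?_, Or.inr ?_⟩
      · intro i
        refine Fin.lastCases ?_ ?_ i
        · simpa using s.2
        · intro i; simpa using hrR i
      · intro i
        refine Fin.lastCases ?_ ?_ i
        · simp only [Fin.snoc_last]
          exact Set.mem_Icc.mpr (abs_le.mp ht1)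
        · intro i; simpa using hlam i
      · have hsum : ∑ i : Fin (j+1), (Fin.snoc lam t : Fin (j+1) → ℝ) i • (Fin.snoc r s : Fin (j+1) → H) i
            = q + t • (s:H) := by
          rw [Fin.sum_univ_castSucc]
          simp [hq]
        rw [hsum]
        have hrw : a - (q + t • (s:H)) = (a - q) - t • (s:H) := by abel
        rw [hrw]
        have key : ‖(a - q) - t • (s:H)‖ ^ 2 ≤ ‖a - q‖ ^ 2 - t ^ 2 :=
          energy_step (a - q) (s:H) hs1
        have hgoal : ((j:ℝ) + 1) / k = j / k + 1 / k := by ring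
        push_cast
        rw [hgoal]
        linarith [key, hE, htsq]
  done

/-- weak Szemerédi regularity.  If `R` is a subset of the closed unit ball
of a real Hilbert space `H`, then for every `k ≥ 1` every `a` in the closed unit ball
satisfies `d_R(a, Q_k) ≤ 1/√k`. -/
theorem stmt3 {H : Type*} [NormedAddCommGroup H] [InnerProductSpace ℝ H]
    (R : Set H) (hR : R ⊆ Metric.closedBall 0 1) (k : ℕ) (hk : 1 ≤ k)
    (a : H) (ha : a ∈ Metric.closedBall 0 1) :
    ⨅ q : Qset R k, dR R a q ≤ 1 / Real.sqrt k := by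
  have h0k : (0:ℝ) ≤ 1 / Real.sqrt k := by positivity
  rcases R.eq_empty_or_nonempty with rfl | hRne
  · haveI : IsEmpty (Qset (∅ : Set H) k) := by
      constructor
      rintro ⟨x, r, lam, hr, -, -⟩
      exact (hr ⟨0, hk⟩)
    rw [Real.iInf_of_isEmpty]
    exact h0k
  · have ha' : ‖a‖ ≤ 1 := mem_closedBall_zero_iff.mp ha
    obtain ⟨r, lam, hrR, hlam, hdisj⟩ := key_lemma hR hRne hk ha' k le_rfl
    obtain ⟨q, hq⟩ : ∃ q, q = ∑ i, lam i • r i := ⟨_, rfl⟩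
    rw [← hq] at hdisj
    have hqQ : q ∈ Qset R k := ⟨r, lam, hrR, hlam, hq⟩
    have hkpos : (0:ℝ) < k := by exact_mod_cast hk
    have hdq : dR R a q ≤ 1 / Real.sqrt k := by
      rcases hdisj with h | h
      · exact h
      · have hkk : (k:ℝ)/k = 1 := div_self hkpos.ne'
        have h0 : ‖a - q‖ ^ 2 ≤ 0 := by rw [hkk] at h; linarith
        have h1 : ‖a - q‖ = 0 := by nlinarith [norm_nonneg (a - q)]
        calc dR R a q ≤ ‖a - q‖ := normR_le_norm hR _
          _ = 0 := h1
          _ ≤ _ := h0k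
    refine ciInf_le_of_le ⟨0, ?_⟩ ⟨q, hqQ⟩ hdq
    rintro x ⟨y, rfl⟩
    exact normR_nonneg R _
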